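/- Let 𝒜 be a nonempty finite alphabet and let ω be a Toeplitz sequence over 𝒜. Then a positive integer n belongs to CF(σ|_{Z(ω,σ)}) if and only if there exist finitely many essential partial periods n₁, n₂, …, n_k ∈ EP(ω) such that n divides lcm(n₁, n₂, …, n_k). -/

import Mathlib

/-- The one-sided shift on sequences.  Sequences are 0-indexed here: index `n`
stands for position `n+1` of the paper's sequences `{1,2,3,…} → 𝒜`. -/
def shift {𝒜 : Type*} (x : ℕ → 𝒜) : ℕ → 𝒜 := fun n => x (n + 1)

/-- `Z(ω,σ)`: the closure of the forward shift-orbit of `ω`. -/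
def orbitClosure {𝒜 : Type*} [TopologicalSpace 𝒜] (ω : ℕ → 𝒜) : Set (ℕ → 𝒜) :=
  closure {y | ∃ n : ℕ, shift^[n] ω = y}

/-- A sequence is Toeplitz if every position is periodically repeated. -/
def IsToeplitz {𝒜 : Type*} (x : ℕ → 𝒜) : Prop :=
  ∀ n : ℕ, ∃ p : ℕ, 0 < p ∧ ∀ k : ℕ, 0 < k → x (n + k * p) = x n

/-- `p ≥ 1` is an essential partial period of `x` if there is a position `m` with
`x(m+kp) = x(m)` for all `k ≥ 1`, while for every `1 ≤ p' < p` some `k ≥ 1` has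
`x(m+kp') ≠ x(m)`. -/
def EP {𝒜 : Type*} (x : ℕ → 𝒜) : Set ℕ :=
  {p | 0 < p ∧ ∃ m : ℕ, (∀ k : ℕ, 0 < k → x (m + k * p) = x m) ∧
    ∀ p' : ℕ, 0 < p' → p' < p → ∃ k : ℕ, 0 < k ∧ x (m + k * p') ≠ x m}

lemma continuous_shift {𝒜 : Type*} [TopologicalSpace 𝒜] :
    Continuous (shift : (ℕ → 𝒜) → (ℕ → 𝒜)) :=
  continuous_pi fun n => continuous_apply (n + 1)

lemma shift_mapsTo {𝒜 : Type*} [TopologicalSpace 𝒜] (ω : ℕ → 𝒜) :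
    Set.MapsTo shift (orbitClosure ω) (orbitClosure ω) := by
  have h : Set.MapsTo (shift (𝒜 := 𝒜)) {y | ∃ n : ℕ, shift^[n] ω = y}
      {y | ∃ n : ℕ, shift^[n] ω = y} := by
    rintro y ⟨n, rfl⟩
    exact ⟨n + 1, Function.iterate_succ_apply' shift n ω⟩
  exact h.closure continuous_shift

/-- The subshift `σ|_{Z(ω,σ)}`, as a self-map of the subspace `Z(ω,σ)`. -/
def shiftZ {𝒜 : Type*} [TopologicalSpace 𝒜] (ω : ℕ → 𝒜) :
    ↥(orbitClosure ω) → ↥(orbitClosure ω) :=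
  Set.MapsTo.restrict shift _ _ (shift_mapsTo ω)

/-- `CF(T)`: the set of `n ≥ 1` such that the cyclic permutation of order `n` is a
continuous factor of `T`, i.e. there is a continuous surjection `f : X → ℤ/nℤ` with
`f(Tx) = f(x) + 1`. -/
def CF {X : Type*} [TopologicalSpace X] (T : X → X) : Set ℕ :=
  {n | 0 < n ∧ ∃ f : X → ZMod n,
    Continuous f ∧ Function.Surjective f ∧ ∀ x, f (T x) = f x + 1}

/-!
A continuous map `f : Z(ω,σ) → ℤ/nℤ` is locally constant, hence fixed by finitely many
coordinates of `ω`; a Toeplitz sequence repeats these coordinates after the lcm `L` of their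
minimal periods, which are essential, so `f(σ^L ω) = f ω` forces `n ∣ L`.

Conversely, let `L` be the lcm of essential periods and `Z_c` the closure of the orbit points
`σ^j ω` with `j ≡ c (mod L)`. These closed sets cover `Z(ω,σ)` and `σ` maps `Z_c` into `Z_{c+1}`;
they are disjoint because a point of `Z_c ∩ Z_{c'}` spreads the value of `ω` on one residue class
to the class shifted by `c' - c`, which contradicts essentiality. Labelling points by `c` gives the
factor of order `L`, and hence of every divisor of `L`.
-/

section Sequences

variable {𝒜 : Type*}

lemma shift_iterate_apply (x : ℕ → 𝒜) (j i : ℕ) : (shift^[j] x) i = x (i + j) := by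
  induction j generalizing x with
  | zero => rfl
  | succ j ih => exact ih (shift x)

/-- Any position `q ≡ m (mod p)` is itself periodic, so some `q + k' u` lies in the forward
orbit `m + k p` of `m`. -/
lemma IsToeplitz.apply_eq_of_natCast_eq {ω : ℕ → 𝒜} (hT : IsToeplitz ω) {p m : ℕ}
    (hper : ∀ k, 0 < k → ω (m + k * p) = ω m) {q : ℕ} (hq : (q : ZMod p) = m) :
    ω q = ω m := by
  rcases Nat.eq_zero_or_pos p with rfl | hpos
  · rw [Nat.cast_inj.mp hq]
  obtain ⟨u, hu, hperq⟩ := hT q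
  have hmr : m < q + (m + 1) * p * u := by
    have : m + 1 ≤ (m + 1) * p * u :=
      Nat.le_mul_of_pos_right _ hu |>.trans' (Nat.le_mul_of_pos_right _ hpos)
    omega
  have hr : ((q + (m + 1) * p * u : ℕ) : ZMod p) = m := by simp [hq]
  obtain ⟨k, hk⟩ := (Nat.modEq_iff_dvd' hmr.le).mp ((ZMod.natCast_eq_natCast_iff _ _ _).mp hr).symm
  have hk0 : 0 < k := Nat.pos_of_ne_zero (by rintro rfl; omega)
  calc ω q = ω (q + (m + 1) * p * u) := (hperq _ (by positivity)).symm
    _ = ω (m + k * p) := by rw [mul_comm k]; congr 1; omega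
    _ = ω m := hper k hk0

lemma IsToeplitz.exists_mem_EP_periodic {ω : ℕ → 𝒜} (hT : IsToeplitz ω) (i : ℕ) :
    ∃ p ∈ EP ω, ∀ k, 0 < k → ω (i + k * p) = ω i := by
  classical
  obtain ⟨hpos, hper⟩ := Nat.find_spec (hT i)
  refine ⟨Nat.find (hT i), ⟨hpos, i, hper, fun p' hp' hlt => ?_⟩, hper⟩
  simpa [hp'] using Nat.find_min (hT i) hlt

lemma lcm_ne_zero_of_subset_EP {ω : ℕ → 𝒜} {s : Finset ℕ} (hs : ↑s ⊆ EP ω) : s.lcm id ≠ 0 :=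
  fun h => by
    obtain ⟨p, hp, hp0⟩ := Finset.lcm_eq_zero_iff.mp h
    exact (hs hp).1.ne' hp0

lemma IsToeplitz.exists_EP_lcm_periodic {ω : ℕ → 𝒜} (hT : IsToeplitz ω) (I : Finset ℕ) :
    ∃ s : Finset ℕ, s.Nonempty ∧ ↑s ⊆ EP ω ∧ ∀ i ∈ I, ω (i + s.lcm id) = ω i := by
  classical
  choose per hperEP hper using hT.exists_mem_EP_periodic
  set s := (insert 0 I).image per
  have hsEP : ↑s ⊆ EP ω := by
    simp only [s, Finset.coe_image, Set.image_subset_iff]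
    exact fun i _ => hperEP i
  refine ⟨s, Finset.image_nonempty.mpr (Finset.insert_nonempty _ _), hsEP, fun i hi => ?_⟩
  obtain ⟨k, hk⟩ : per i ∣ s.lcm id :=
    Finset.dvd_lcm (Finset.mem_image_of_mem _ (Finset.mem_insert_of_mem hi))
  rw [hk, mul_comm]
  exact hper i k (Nat.pos_of_ne_zero fun hk0 => lcm_ne_zero_of_subset_EP hsEP (by simp [hk, hk0]))

end Sequences

section Topology

variable {𝒜 : Type*} [TopologicalSpace 𝒜]

def orbitClosureMod (ω : ℕ → 𝒜) (p : ℕ) (c : ZMod p) : Set (ℕ → 𝒜) :=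
  closure {y | ∃ j : ℕ, (j : ZMod p) = c ∧ shift^[j] ω = y}

lemma iterate_shift_mem_orbitClosureMod (ω : ℕ → 𝒜) (p j : ℕ) :
    shift^[j] ω ∈ orbitClosureMod ω p j :=
  subset_closure ⟨j, rfl, rfl⟩

lemma orbitClosure_subset_iUnion_orbitClosureMod (ω : ℕ → 𝒜) (p : ℕ) [NeZero p] :
    orbitClosure ω ⊆ ⋃ c : ZMod p, orbitClosureMod ω p c := by
  refine closure_minimal ?_ (isClosed_iUnion_of_finite fun _ => isClosed_closure)
  rintro y ⟨j, rfl⟩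
  exact Set.mem_iUnion.mpr ⟨j, iterate_shift_mem_orbitClosureMod ω p j⟩

lemma shift_mem_orbitClosureMod {ω : ℕ → 𝒜} {p : ℕ} {c : ZMod p} {y : ℕ → 𝒜}
    (hy : y ∈ orbitClosureMod ω p c) : shift y ∈ orbitClosureMod ω p (c + 1) := by
  refine closure_mono ?_ (image_closure_subset_closure_image continuous_shift ⟨y, hy, rfl⟩)
  rintro _ ⟨_, ⟨j, rfl, rfl⟩, rfl⟩
  exact ⟨j + 1, by push_cast; rfl, Function.iterate_succ_apply' shift j ω⟩

lemma orbitClosureMod_subset_of_dvd (ω : ℕ → 𝒜) {p L : ℕ} (hdvd : p ∣ L) (j : ℕ) :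
    orbitClosureMod ω L j ⊆ orbitClosureMod ω p j := by
  refine closure_mono ?_
  rintro _ ⟨i, hi, rfl⟩
  refine ⟨i, ?_, rfl⟩
  rw [ZMod.natCast_eq_natCast_iff] at hi ⊢
  exact hi.of_dvd hdvd

lemma orbitClosureMod_apply_eq [T1Space 𝒜] {ω : ℕ → 𝒜} {p : ℕ} {a : ZMod p} {b : 𝒜}
    (hω : ∀ q : ℕ, (q : ZMod p) = a → ω q = b) {c : ZMod p} {y : ℕ → 𝒜}
    (hy : y ∈ orbitClosureMod ω p c) {i : ℕ} (hi : (i : ZMod p) = a - c) : y i = b := by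
  have hclosed : IsClosed {z : ℕ → 𝒜 | ∀ i : ℕ, (i : ZMod p) = a - c → z i = b} := by
    simp only [Set.ofPred_forall]
    exact isClosed_iInter fun i => isClosed_iInter fun _ =>
      isClosed_singleton.preimage (continuous_apply i)
  refine closure_minimal ?_ hclosed hy i hi
  rintro _ ⟨j, rfl, rfl⟩ i hi
  rw [shift_iterate_apply]
  exact hω _ (by push_cast; rw [hi]; ring)

variable [DiscreteTopology 𝒜]

/-- Approximate `y` by an orbit point `σ^j ω` with `j ≡ c'` on a window longer than the period
`u p` of position `q`, and read both at the coordinate `i < u p` with `i + j ≡ q (mod u p)`: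
there `σ^j ω` shows `ω q`, while `y ∈ orbitClosureMod ω p c` shows `b` since `i ≡ a - c`. -/
lemma IsToeplitz.apply_eq_of_mem_orbitClosureMod {ω : ℕ → 𝒜} (hT : IsToeplitz ω) {p : ℕ}
    [NeZero p] {a : ZMod p} {b : 𝒜} (hω : ∀ q : ℕ, (q : ZMod p) = a → ω q = b) {c c' : ZMod p}
    {y : ℕ → 𝒜} (hy : y ∈ orbitClosureMod ω p c) (hy' : y ∈ orbitClosureMod ω p c')
    (q : ℕ) (hq : (q : ZMod p) = a + (c' - c)) : ω q = b := by
  obtain ⟨u, hu, hperq⟩ := hT q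
  have : NeZero (u * p) := ⟨(Nat.mul_pos hu (Nat.pos_of_neZero p)).ne'⟩
  have hperq' : ∀ k, 0 < k → ω (q + k * (u * p)) = ω q := fun k hk => by
    rw [show k * (u * p) = k * p * u by ring]
    exact hperq _ (Nat.mul_pos hk (Nat.pos_of_neZero p))
  have hcyl : IsOpen (Set.pi (Set.Iio (u * p)) fun i => {y i}) :=
    isOpen_set_pi (Set.finite_Iio _) fun _ _ => isOpen_discrete _
  obtain ⟨_, hz, j, hj, rfl⟩ := mem_closure_iff.mp hy' _ hcyl fun i _ => rfl
  set i := ((q : ZMod (u * p)) - j).val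
  have hij : ((i + j : ℕ) : ZMod (u * p)) = q := by simp [i]
  have hpij : ((i + j : ℕ) : ZMod p) = q := by
    rw [ZMod.natCast_eq_natCast_iff] at hij ⊢
    exact hij.of_dvd (dvd_mul_left p u)
  have hyi : y i = b := by
    refine orbitClosureMod_apply_eq hω hy ?_
    push_cast at hpij
    linear_combination hpij + hq - hj
  have hzi : (shift^[j] ω) i = y i := hz i (ZMod.val_lt _)
  rw [shift_iterate_apply, hT.apply_eq_of_natCast_eq hperq' hij] at hzi
  rw [hzi, hyi]

lemma IsToeplitz.apply_eq_of_mem_orbitClosureMod_nsmul {ω : ℕ → 𝒜} (hT : IsToeplitz ω)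
    {p : ℕ} [NeZero p] {a : ZMod p} {b : 𝒜} (hω : ∀ q : ℕ, (q : ZMod p) = a → ω q = b)
    {c c' : ZMod p} {y : ℕ → 𝒜} (hy : y ∈ orbitClosureMod ω p c)
    (hy' : y ∈ orbitClosureMod ω p c') (t : ℕ) :
    ∀ q : ℕ, (q : ZMod p) = a + t * (c' - c) → ω q = b := by
  induction t with
  | zero => simpa using hω
  | succ t ih =>
    intro q hq
    exact hT.apply_eq_of_mem_orbitClosureMod ih hy hy' q (by rw [hq]; push_cast; ring)

/-- If `d = c' - c ≠ 0`, a common point would make the witness position `m` of the essential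
period `p` periodic with the smaller period `d.val`. -/
lemma IsToeplitz.eq_of_mem_orbitClosureMod_of_mem_EP {ω : ℕ → 𝒜} (hT : IsToeplitz ω) {p : ℕ}
    (hp : p ∈ EP ω) {c c' : ZMod p} {y : ℕ → 𝒜} (hy : y ∈ orbitClosureMod ω p c)
    (hy' : y ∈ orbitClosureMod ω p c') : c = c' := by
  obtain ⟨hp0, m, hper, hess⟩ := hp
  have : NeZero p := ⟨hp0.ne'⟩
  by_contra hne
  have hd : (c' - c).val ≠ 0 := by
    rw [ne_eq, ZMod.val_eq_zero, sub_eq_zero]; exact Ne.symm hne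
  obtain ⟨k, hk, hne⟩ := hess _ (Nat.pos_of_ne_zero hd) (ZMod.val_lt _)
  refine hne (hT.apply_eq_of_mem_orbitClosureMod_nsmul
    (fun q hq => hT.apply_eq_of_natCast_eq hper hq) hy hy' k _ ?_)
  push_cast
  rw [ZMod.natCast_zmod_val]

lemma natCast_eq_natCast_lcm_of_forall {s : Finset ℕ} {j j' : ℕ}
    (h : ∀ p ∈ s, (j : ZMod p) = j') : (j : ZMod (s.lcm id)) = j' := by
  simp only [ZMod.natCast_eq_natCast_iff, Nat.modEq_iff_dvd, Int.natCast_dvd] at h ⊢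
  exact Finset.lcm_dvd_iff.mpr h

lemma IsToeplitz.eq_of_mem_orbitClosureMod_lcm {ω : ℕ → 𝒜} (hT : IsToeplitz ω)
    {s : Finset ℕ} (hs : ↑s ⊆ EP ω) [NeZero (s.lcm id)] {c c' : ZMod (s.lcm id)}
    {y : ℕ → 𝒜} (hy : y ∈ orbitClosureMod ω (s.lcm id) c)
    (hy' : y ∈ orbitClosureMod ω (s.lcm id) c') : c = c' := by
  rw [← ZMod.natCast_zmod_val c] at hy ⊢
  rw [← ZMod.natCast_zmod_val c'] at hy' ⊢
  exact natCast_eq_natCast_lcm_of_forall fun p hps => hT.eq_of_mem_orbitClosureMod_of_mem_EP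
    (hs hps) (orbitClosureMod_subset_of_dvd ω (Finset.dvd_lcm hps) _ hy)
    (orbitClosureMod_subset_of_dvd ω (Finset.dvd_lcm hps) _ hy')

end Topology

section CyclicFactors

lemma mem_CF_of_dvd {X : Type*} [TopologicalSpace X] {T : X → X} {n N : ℕ}
    (hn : 0 < n) (hdvd : n ∣ N) (hN : N ∈ CF T) : n ∈ CF T := by
  obtain ⟨-, f, hc, hs, he⟩ := hN
  have : NeZero n := ⟨hn.ne'⟩
  refine ⟨hn, ZMod.castHom hdvd (ZMod n) ∘ f, continuous_of_discreteTopology.comp hc,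
    fun b => ?_, fun x => by simp only [Function.comp_apply, he x, map_add, map_one]⟩
  obtain ⟨x, hx⟩ := hs (b.val : ZMod N)
  exact ⟨x, by simp [hx]⟩

lemma mem_CF_of_partition {X : Type*} [TopologicalSpace X] {T : X → X} {n : ℕ} [NeZero n]
    (F : ZMod n → Set X) (hclosed : ∀ c, IsClosed (F c)) (hcover : ∀ x, ∃ c, x ∈ F c)
    (hdisj : ∀ x c c', x ∈ F c → x ∈ F c' → c = c') (hne : ∀ c, (F c).Nonempty)
    (hmaps : ∀ c, Set.MapsTo T (F c) (F (c + 1))) : n ∈ CF T := by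
  choose f hf using hcover
  have hfiber : ∀ S : Set (ZMod n), f ⁻¹' S = ⋃ c ∈ S, F c := fun S => by
    ext x
    simp only [Set.mem_preimage, Set.mem_iUnion, exists_prop]
    exact ⟨fun h => ⟨f x, h, hf x⟩, fun ⟨c, hc, hx⟩ => hdisj x _ _ (hf x) hx ▸ hc⟩
  refine ⟨Nat.pos_of_neZero n, f, continuous_iff_isClosed.mpr fun S _ => ?_, fun c => ?_,
    fun x => hdisj _ _ _ (hf _) (hmaps _ (hf x))⟩
  · rw [hfiber]
    exact S.toFinite.isClosed_biUnion fun c _ => hclosed c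
  · obtain ⟨x, hx⟩ := hne c
    exact ⟨x, hdisj x _ _ (hf x) hx⟩

lemma apply_iterate_of_apply_eq_add_one {X : Type*} {T : X → X} {n : ℕ} {f : X → ZMod n}
    (he : ∀ x, f (T x) = f x + 1) (j : ℕ) (x : X) : f (T^[j] x) = f x + j := by
  induction j with
  | zero => simp
  | succ j ih => rw [Function.iterate_succ_apply', he, ih]; push_cast; ring

end CyclicFactors

section Subshift

variable {𝒜 : Type*} [TopologicalSpace 𝒜]

def orbitPoint (ω : ℕ → 𝒜) (j : ℕ) : orbitClosure ω :=
  ⟨shift^[j] ω, subset_closure ⟨j, rfl⟩⟩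

lemma iterate_shiftZ_orbitPoint_zero (ω : ℕ → 𝒜) (j : ℕ) :
    (shiftZ ω)^[j] (orbitPoint ω 0) = orbitPoint ω j := by
  induction j with
  | zero => rfl
  | succ j ih =>
    rw [Function.iterate_succ_apply', ih]
    exact Subtype.ext (Function.iterate_succ_apply' shift j ω).symm

variable [DiscreteTopology 𝒜]

lemma exists_finset_forall_eq_of_continuous {Y : Type*} [TopologicalSpace Y]
    [DiscreteTopology Y] (ω : ℕ → 𝒜) {f : orbitClosure ω → Y} (hf : Continuous f) :
    ∃ I : Finset ℕ, ∀ x : orbitClosure ω, (∀ i ∈ I, (x : ℕ → 𝒜) i = ω i) →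
      f x = f (orbitPoint ω 0) := by
  have hnhds : f ⁻¹' {f (orbitPoint ω 0)} ∈ nhds (orbitPoint ω 0) :=
    hf.continuousAt.preimage_mem_nhds (isOpen_discrete _ |>.mem_nhds rfl)
  obtain ⟨V, hV, hVsub⟩ := (mem_nhds_subtype _ _ _).mp hnhds
  rw [nhds_pi, Filter.mem_pi] at hV
  obtain ⟨I, hI, t, ht, hIt⟩ := hV
  simp only [nhds_discrete, Filter.mem_pure] at ht
  refine ⟨hI.toFinset, fun x hx => hVsub (hIt fun i hi => ?_)⟩
  rw [hx i (hI.mem_toFinset.mpr hi)]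
  exact ht i

lemma IsToeplitz.lcm_mem_CF {ω : ℕ → 𝒜} (hT : IsToeplitz ω) {s : Finset ℕ}
    (hs : ↑s ⊆ EP ω) : s.lcm id ∈ CF (shiftZ ω) := by
  have : NeZero (s.lcm id) := ⟨lcm_ne_zero_of_subset_EP hs⟩
  refine mem_CF_of_partition (fun c => Subtype.val ⁻¹' orbitClosureMod ω (s.lcm id) c)
    (fun c => isClosed_closure.preimage continuous_subtype_val)
    (fun x => by simpa using orbitClosure_subset_iUnion_orbitClosureMod ω (s.lcm id) x.2)
    (fun x c c' => hT.eq_of_mem_orbitClosureMod_lcm hs) (fun c => ?_)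
    (fun c x hx => shift_mem_orbitClosureMod hx)
  refine ⟨orbitPoint ω c.val, ?_⟩
  simpa [orbitPoint, ZMod.natCast_zmod_val] using
    iterate_shift_mem_orbitClosureMod ω (s.lcm id) c.val

end Subshift

theorem stmt14_general {𝒜 : Type*} [TopologicalSpace 𝒜] [DiscreteTopology 𝒜]
    (ω : ℕ → 𝒜) (hT : IsToeplitz ω) (n : ℕ) (hn : 0 < n) :
    n ∈ CF (shiftZ ω) ↔
      ∃ s : Finset ℕ, s.Nonempty ∧ ↑s ⊆ EP ω ∧ n ∣ s.lcm id := by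
  constructor
  · rintro ⟨-, f, hf, -, he⟩
    obtain ⟨I, hI⟩ := exists_finset_forall_eq_of_continuous ω hf
    obtain ⟨s, hs, hsEP, hper⟩ := hT.exists_EP_lcm_periodic I
    refine ⟨s, hs, hsEP, (ZMod.natCast_eq_zero_iff _ n).mp ?_⟩
    have hreturn := hI (orbitPoint ω (s.lcm id)) fun i hi => by
      simp only [orbitPoint, shift_iterate_apply, hper i hi]
    rwa [← iterate_shiftZ_orbitPoint_zero, apply_iterate_of_apply_eq_add_one he,
      add_eq_left] at hreturn
  · rintro ⟨s, -, hsEP, hdvd⟩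
    exact mem_CF_of_dvd hn hdvd (hT.lcm_mem_CF hsEP)

/-- For a Toeplitz sequence `ω`, a positive integer `n` belongs to
`CF(σ|_{Z(ω,σ)})` if and only if `n` divides the least common multiple of finitely
many essential partial periods of `ω`. -/
theorem stmt14 {𝒜 : Type*} [Fintype 𝒜] [Nonempty 𝒜] [TopologicalSpace 𝒜] [DiscreteTopology 𝒜]
    (ω : ℕ → 𝒜) (hT : IsToeplitz ω) (n : ℕ) (hn : 0 < n) :
    n ∈ CF (shiftZ ω) ↔
      ∃ s : Finset ℕ, s.Nonempty ∧ ↑s ⊆ EP ω ∧ n ∣ s.lcm id :=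
  stmt14_general ω hT n hn
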